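/- Let K be a field, n ≥ 1, m ≥ 1, t₀ ∈ ℤ^m, and A_α : {t ∈ ℤ^m : t ≥ t₀} → M_n(K) with A_α(t+1_β)A_β(t) = A_β(t+1_α)A_α(t) for all t ≥ t₀ and all α, β. Let V(t₀) be the set of all functions x : {t ∈ ℤ^m : t ≥ t₀} → K^n satisfying x(t+1_α) = A_α(t)x(t) for all t ≥ t₀ and all α ∈ {1,…,m}. Then V(t₀) is a K-vector space (under pointwise operations) of dimension n. -/
import Mathlib



def Nf {m : ℕ} (t₀ t : Fin m → ℤ) : ℕ := ∑ i, (t i - t₀ i).toNat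

lemma Nf_sub_lt {m : ℕ} {t₀ t : Fin m → ℤ} (h : t₀ ≤ t) {β : Fin m}
    (hβ : t₀ β < t β) : Nf t₀ (t - Pi.single β 1) < Nf t₀ t := by
  refine Finset.sum_lt_sum (fun i _ => ?_) ⟨β, Finset.mem_univ β, ?_⟩
  · rcases eq_or_ne i β with rfl | hne
    · simp only [Pi.sub_apply, Pi.single_eq_same]
      omega
    · simp [Pi.single_eq_of_ne hne]
  · simp only [Pi.sub_apply, Pi.single_eq_same]
    omega

lemma le_sub_single {m : ℕ} {t₀ t : Fin m → ℤ} (h : t₀ ≤ t) {β : Fin m}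
    (hβ : t₀ β < t β) : t₀ ≤ t - Pi.single β 1 := by
  intro i
  rcases eq_or_ne i β with rfl | hne
  · simp only [Pi.sub_apply, Pi.single_eq_same]; omega
  · simp only [Pi.sub_apply, Pi.single_eq_of_ne hne, sub_zero]
    exact h i

open Classical in
noncomputable def sol {m n : ℕ} {K : Type*} [Field K] (t₀ : Fin m → ℤ)
    (A : Fin m → (Fin m → ℤ) → Matrix (Fin n) (Fin n) K) (v : Fin n → K)
    (t : Fin m → ℤ) : Fin n → K :=
  if h : t₀ ≤ t ∧ t ≠ t₀ then
    have hne : (Finset.univ.filter fun i => t₀ i < t i).Nonempty := by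
      by_contra hc
      apply h.2
      funext i
      have he := Finset.not_nonempty_iff_eq_empty.mp hc
      have hi : i ∉ Finset.univ.filter fun i => t₀ i < t i := by simp [he]
      simp only [Finset.mem_filter, Finset.mem_univ, true_and, not_lt] at hi
      have h1 : t₀ i ≤ t i := h.1 i
      omega
    have hβ : t₀ ((Finset.univ.filter fun i => t₀ i < t i).min' hne)
        < t ((Finset.univ.filter fun i => t₀ i < t i).min' hne) := by
      have hmem := (Finset.univ.filter fun i => t₀ i < t i).min'_mem hne
      simpa using hmem
    have : Nf t₀ (t - Pi.single ((Finset.univ.filter fun i => t₀ i < t i).min' hne) 1) < Nf t₀ t :=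
      Nf_sub_lt h.1 hβ
    (A ((Finset.univ.filter fun i => t₀ i < t i).min' hne)
        (t - Pi.single ((Finset.univ.filter fun i => t₀ i < t i).min' hne) 1)).mulVec
      (sol t₀ A v (t - Pi.single ((Finset.univ.filter fun i => t₀ i < t i).min' hne) 1))
  else v
termination_by Nf t₀ t

lemma sol_t₀ {m n : ℕ} {K : Type*} [Field K] (t₀ : Fin m → ℤ)
    (A : Fin m → (Fin m → ℤ) → Matrix (Fin n) (Fin n) K) (v : Fin n → K) :
    sol t₀ A v t₀ = v := by
  rw [sol]; simp


open Classical in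
lemma sol_spec {m n : ℕ} {K : Type*} [Field K] (t₀ : Fin m → ℤ)
    (A : Fin m → (Fin m → ℤ) → Matrix (Fin n) (Fin n) K) (v : Fin n → K)
    {t : Fin m → ℤ} (h1 : t₀ ≤ t) (h2 : t ≠ t₀) {β : Fin m}
    (hβ : t₀ β < t β) (hmin : ∀ γ : Fin m, t₀ γ < t γ → β ≤ γ) :
    sol t₀ A v t = (A β (t - Pi.single β 1)).mulVec (sol t₀ A v (t - Pi.single β 1)) := by
  rw [sol, dif_pos ⟨h1, h2⟩]
  have hne : (Finset.univ.filter fun i => t₀ i < t i).Nonempty := ⟨β, by simp [hβ]⟩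
  have hm : (Finset.univ.filter fun i => t₀ i < t i).min' hne = β := by
    refine le_antisymm ?_ ?_
    · exact Finset.min'_le _ β (by simp [hβ])
    · refine hmin _ ?_
      have := Finset.min'_mem (Finset.univ.filter fun i => t₀ i < t i) hne
      simpa using this
  simp only [hm]

lemma sol_rec {m n : ℕ} {K : Type*} [Field K] {t₀ : Fin m → ℤ}
    {A : Fin m → (Fin m → ℤ) → Matrix (Fin n) (Fin n) K}
    (hcompat : ∀ t : Fin m → ℤ, t₀ ≤ t → ∀ α β : Fin m,
      A α (t + Pi.single β 1) * A β t = A β (t + Pi.single α 1) * A α t)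
    (v : Fin n → K) :
    ∀ (N : ℕ) (t : Fin m → ℤ), Nf t₀ t = N → t₀ ≤ t → ∀ α : Fin m,
      sol t₀ A v (t + Pi.single α 1) = (A α t).mulVec (sol t₀ A v t) := by
  intro N
  induction N using Nat.strong_induction_on with
  | _ N ih =>
  intro t hN ht α
  classical
  have huα : (t + Pi.single α 1 : Fin m → ℤ) α = t α + 1 := by simp
  have htu : t₀ ≤ t + Pi.single α 1 := by
    intro i
    rcases eq_or_ne i α with rfl | hne
    · have h1 : t₀ i ≤ t i := ht i
      simp only [Pi.add_apply, Pi.single_eq_same]; omega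
    · simp only [Pi.add_apply, Pi.single_eq_of_ne hne, add_zero]; exact ht i
  have hune : t + Pi.single α 1 ≠ t₀ := by
    intro he
    have h1 : t₀ α ≤ t α := ht α
    have h2 : (t + Pi.single α 1 : Fin m → ℤ) α = t₀ α := by rw [he]
    rw [huα] at h2; omega
  have hSne : (Finset.univ.filter fun i => t₀ i < (t + Pi.single α 1 : Fin m → ℤ) i).Nonempty := by
    refine ⟨α, ?_⟩
    have h1 : t₀ α ≤ t α := ht α
    simp only [Finset.mem_filter, Finset.mem_univ, true_and, huα]
    omega
  obtain ⟨β, hβu, hβmin⟩ : ∃ β : Fin m, t₀ β < (t + Pi.single α 1 : Fin m → ℤ) β ∧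
      ∀ γ : Fin m, t₀ γ < (t + Pi.single α 1 : Fin m → ℤ) γ → β ≤ γ := by
    refine ⟨(Finset.univ.filter fun i => t₀ i < (t + Pi.single α 1 : Fin m → ℤ) i).min' hSne,
      ?_, ?_⟩
    · have := Finset.min'_mem _ hSne
      simpa using this
    · intro γ hγ
      exact Finset.min'_le _ γ (by simpa using hγ)
  have hstep := sol_spec t₀ A v htu hune hβu hβmin
  rcases eq_or_ne β α with rfl | hβα
  · have he : t + Pi.single β 1 - Pi.single β 1 = t := by ring
    rw [hstep, he]
  · have hβα' : β < α := by
      refine lt_of_le_of_ne ?_ hβα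
      refine hβmin α ?_
      have h1 : t₀ α ≤ t α := ht α
      rw [huα]; omega
    have huβ : (t + Pi.single α 1 : Fin m → ℤ) β = t β := by
      simp [Pi.single_eq_of_ne hβα]
    have htβ : t₀ β < t β := by rwa [huβ] at hβu
    have hts : t₀ ≤ t - Pi.single β 1 := le_sub_single ht htβ
    have hus : t + Pi.single α 1 - Pi.single β 1 = (t - Pi.single β 1) + Pi.single α 1 := by ring
    have hst : (t - Pi.single β 1) + Pi.single β 1 = t := by ring
    have hNs : Nf t₀ (t - Pi.single β 1) < N := hN ▸ Nf_sub_lt ht htβ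
    have hIH : sol t₀ A v ((t - Pi.single β 1) + Pi.single α 1)
        = (A α (t - Pi.single β 1)).mulVec (sol t₀ A v (t - Pi.single β 1)) :=
      ih _ hNs _ rfl hts α
    have htne : t ≠ t₀ := fun he => by rw [he] at htβ; omega
    have hspec : sol t₀ A v t
        = (A β (t - Pi.single β 1)).mulVec (sol t₀ A v (t - Pi.single β 1)) := by
      refine sol_spec t₀ A v ht htne htβ ?_
      intro γ hγ
      by_contra hc
      push_neg at hc
      have hγα : γ ≠ α := ne_of_lt (lt_trans hc hβα')
      have h2 : t₀ γ < (t + Pi.single α 1 : Fin m → ℤ) γ := by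
        simpa [Pi.single_eq_of_ne hγα] using hγ
      exact absurd (hβmin γ h2) (not_le.mpr hc)
    rw [hstep, hus, hIH, Matrix.mulVec_mulVec, hcompat _ hts β α, ← Matrix.mulVec_mulVec, hst,
      hspec]

/-- The set `V(t₀)` of all solutions `x : {t : t₀ ≤ t} → Kⁿ` of the linear
homogeneous multitime recurrence `x (t + 1_α) = A α t *ᵥ x t`, as a
`K`-submodule of the space of all functions `{t : t₀ ≤ t} → Kⁿ` (pointwise
operations). -/
def solSpace {m n : ℕ} {K : Type*} [Field K] (t₀ : Fin m → ℤ)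
    (A : Fin m → (Fin m → ℤ) → Matrix (Fin n) (Fin n) K) :
    Submodule K ({t : Fin m → ℤ // t₀ ≤ t} → (Fin n → K)) where
  carrier := {x | ∀ (t : {t : Fin m → ℤ // t₀ ≤ t}) (α : Fin m),
    x ⟨t.1 + Pi.single α 1,
      le_trans t.2 (Pi.le_def.mpr fun i => by
        have h : (0 : ℤ) ≤ (Pi.single α 1 : Fin m → ℤ) i := by
          rcases eq_or_ne i α with h | h
          · subst h; simp
          · simp [Pi.single_eq_of_ne h]
        simp only [Pi.add_apply]
        omega)⟩ = (A α t.1).mulVec (x t)}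
  add_mem' := by
    intro a b ha hb t α
    simp only [Pi.add_apply, ha t α, hb t α, Matrix.mulVec_add]
  zero_mem' := by
    intro t α
    simp only [Pi.zero_apply, Matrix.mulVec_zero]
  smul_mem' := by
    intro c a ha t α
    simp only [Pi.smul_apply, ha t α, Matrix.mulVec_smul]

lemma solSpace_zero {m n : ℕ} {K : Type*} [Field K] {t₀ : Fin m → ℤ}
    {A : Fin m → (Fin m → ℤ) → Matrix (Fin n) (Fin n) K}
    (x : {t : Fin m → ℤ // t₀ ≤ t} → (Fin n → K)) (hx : x ∈ solSpace t₀ A)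
    (h0 : x ⟨t₀, le_refl t₀⟩ = 0) :
    ∀ (N : ℕ) (t : Fin m → ℤ) (ht : t₀ ≤ t), Nf t₀ t = N → x ⟨t, ht⟩ = 0 := by
  intro N
  induction N using Nat.strong_induction_on with
  | _ N ih =>
  intro t ht hN
  rcases eq_or_ne t t₀ with rfl | htne
  · exact h0
  · have hex : ∃ β : Fin m, t₀ β < t β := by
      by_contra hc
      push_neg at hc
      exact htne (funext fun i => le_antisymm (hc i) (ht i))
    obtain ⟨β, hβ⟩ := hex
    have hts : t₀ ≤ t - Pi.single β 1 := le_sub_single ht hβ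
    have hst : (t - Pi.single β 1) + Pi.single β 1 = t := by ring
    have hrec := hx ⟨t - Pi.single β 1, hts⟩ β
    have hIH : x ⟨t - Pi.single β 1, hts⟩ = 0 :=
      ih _ (hN ▸ Nf_sub_lt ht hβ) _ hts rfl
    have he : x ⟨t, ht⟩ = x ⟨(t - Pi.single β 1) + Pi.single β 1,
        le_trans (⟨t - Pi.single β 1, hts⟩ : {t : Fin m → ℤ // t₀ ≤ t}).2
          (Pi.le_def.mpr fun i => by
            have h : (0 : ℤ) ≤ (Pi.single β 1 : Fin m → ℤ) i := by
              rcases eq_or_ne i β with h | h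
              · subst h; simp
              · simp [Pi.single_eq_of_ne h]
            simp only [Pi.add_apply]
            omega)⟩ := by
      exact congrArg x (Subtype.ext hst.symm)
    rw [he, hrec, hIH, Matrix.mulVec_zero]

/-- (Theorem 7 a) of the paper).
If `A α (t+1_β) * A β t = A β (t+1_α) * A α t` for all `t ≥ t₀` and all `α β`,
then the space `V(t₀)` of all solutions of the linear homogeneous recurrence
`x (t + 1_α) = A α t *ᵥ x t` on `{t : t₀ ≤ t}` is a `K`-vector space of
dimension `n`. -/
theorem solution_space_finrank
    {m n : ℕ} (hm : 1 ≤ m) (hn : 1 ≤ n) {K : Type*} [Field K]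
    (t₀ : Fin m → ℤ)
    (A : Fin m → (Fin m → ℤ) → Matrix (Fin n) (Fin n) K)
    (hcompat : ∀ t : Fin m → ℤ, t₀ ≤ t → ∀ α β : Fin m,
      A α (t + Pi.single β 1) * A β t = A β (t + Pi.single α 1) * A α t) :
    Module.finrank K (solSpace t₀ A) = n := by
  classical
  let φ : (solSpace t₀ A) →ₗ[K] (Fin n → K) :=
    { toFun := fun x => x.1 ⟨t₀, le_refl t₀⟩
      map_add' := fun x y => rfl
      map_smul' := fun c x => rfl }
  have hbij : Function.Bijective φ := by
    constructor
    · rw [injective_iff_map_eq_zero]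
      intro x hx0
      ext t
      have := solSpace_zero x.1 x.2 hx0 (Nf t₀ t.1) t.1 t.2 rfl
      have ht : (⟨t.1, t.2⟩ : {t : Fin m → ℤ // t₀ ≤ t}) = t := rfl
      rw [ht] at this
      rw [this]
      rfl
    · intro v
      refine ⟨⟨fun t => sol t₀ A v t.1, ?_⟩, ?_⟩
      · intro t α
        exact sol_rec hcompat v (Nf t₀ t.1) t.1 rfl t.2 α
      · exact sol_t₀ t₀ A v
  rw [(LinearEquiv.ofBijective φ hbij).finrank_eq, Module.finrank_fin_fun]
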